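/- arXiv:1904.11408 — 2 statements merged into one kernel-verified Lean document; each statement's English description precedes it below -/
import Mathlib

section
/- Let X = [0,1]^[0,1] with the product topology, and let B ⊆ X × [0,1) be the set of pairs ((x_t)_{t∈[0,1]}, k) such that x_t = 0 for t ∈ φ(k) and x_t = 1 for t ∉ φ(k), where φ : [0,1) → {finite subsets of [0,1]} is an injection such that for every finite set F ⊆ [0,1] and every ε > 0 there exists k ∈ (1-ε, 1) with F ⊆ φ(k). Then the point ((0)_{t∈[0,1]}, 1) lies in the closure of B in X × [0,1]. -/
open unitInterval

/-- Let `X = [0,1]^[0,1]` with the product topology and let `φ` be an injection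
from `[0,1)` to finite subsets of `[0,1]` such that every finite set is contained
in `φ k` for some `k` arbitrarily close to `1`.  Let `B` consist of the pairs
`((x_t), k)` with `k < 1`, `x_t = 0` for `t ∈ φ k` and `x_t = 1` otherwise.
Then `((0)_t, 1)` lies in the closure of `B` in `X × [0,1]`. -/
theorem stmt_2 (φ : I → Set I)
    (hinj : Set.InjOn φ {k : I | (k : ℝ) < 1})
    (hfin : ∀ k : I, (k : ℝ) < 1 → (φ k).Finite)
    (hdense : ∀ F : Set I, F.Finite → ∀ ε : ℝ, 0 < ε →
      ∃ k : I, 1 - ε < (k : ℝ) ∧ (k : ℝ) < 1 ∧ F ⊆ φ k)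
    (B : Set ((I → I) × I))
    (hB : B = {p : (I → I) × I | (p.2 : ℝ) < 1 ∧
      ∀ t : I, (t ∈ φ p.2 → p.1 t = 0) ∧ (t ∉ φ p.2 → p.1 t = 1)}) :
    ((fun _ => 0, 1) : (I → I) × I) ∈ closure B := by
  subst hB
  rw [mem_closure_iff_nhds]
  intro U hU
  rw [mem_nhds_prod_iff] at hU
  obtain ⟨U₁, hU₁, U₂, hU₂, hsub⟩ := hU
  rw [nhds_pi, Filter.mem_pi] at hU₁
  obtain ⟨F, hFfin, V, hV, hVsub⟩ := hU₁
  obtain ⟨ε, hε, hball⟩ := Metric.mem_nhds_iff.mp hU₂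
  obtain ⟨k, hk1, hk2, hkF⟩ := hdense F hFfin ε hε
  classical
  refine ⟨(fun t => if t ∈ φ k then 0 else 1, k), hsub ⟨?_, ?_⟩,
    hk2, fun t => ⟨fun h => if_pos h, fun h => if_neg h⟩⟩
  · apply hVsub
    intro t ht
    simp only [if_pos (hkF ht)]
    exact mem_of_mem_nhds (hV t)
  · apply hball
    rw [Metric.mem_ball, Subtype.dist_eq, Real.dist_eq, abs_sub_lt_iff]
    constructor <;> simp <;> linarith [k.2.2]
end

section
/- Let X = [0,1]^[0,1] with the product topology and let B₀ ⊆ X × [0,1) be a countable set such that every element ((x_t), k) ∈ B₀ satisfies: x_t ∈ {0,1} for all t, and x_t = 0 for only finitely many t. Then the point ((0)_{t∈[0,1]}, 1) is not in the closure of B₀ in X × [0,1]. -/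
open unitInterval

/-- Let `X = [0,1]^[0,1]` with the product topology and let `B₀ ⊆ X × [0,1)` be a
countable set all of whose elements `((x_t), k)` satisfy `x_t ∈ {0,1}` for all `t`
and `x_t = 0` for only finitely many `t`.  Then `((0)_t, 1)` is not in the closure
of `B₀` in `X × [0,1]`. -/
theorem stmt_3 (B₀ : Set ((I → I) × I)) (hcount : B₀.Countable)
    (hlt : ∀ p ∈ B₀, (p.2 : ℝ) < 1)
    (hval : ∀ p ∈ B₀, ∀ t : I, p.1 t = 0 ∨ p.1 t = 1)
    (hfin : ∀ p ∈ B₀, {t : I | p.1 t = 0}.Finite) :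
    ((fun _ => 0, 1) : (I → I) × I) ∉ closure B₀ := by
  intro hcl
  -- countable set of "bad" coordinates
  set C : Set I := ⋃ p ∈ B₀, {t : I | p.1 t = 0} with hC
  have hCc : C.Countable := Set.Countable.biUnion hcount fun p hp => (hfin p hp).countable
  have hne : C ≠ Set.univ := by
    intro h
    have : (Set.univ : Set I).Countable := h ▸ hCc
    rw [Set.countable_univ_iff] at this
    have hu : Uncountable I := by
      rw [← Cardinal.aleph0_lt_mk_iff, Cardinal.mk_Icc_real zero_lt_one]
      exact Cardinal.aleph0_lt_continuum
    exact (not_countable_iff.mpr hu) this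
  obtain ⟨t₀, ht₀⟩ : ∃ t₀ : I, t₀ ∉ C := by
    by_contra h
    push_neg at h
    exact hne (Set.eq_univ_of_forall h)
  -- the open set
  set U : Set ((I → I) × I) := {q | (q.1 t₀ : ℝ) < 1/2} with hU
  have hUopen : IsOpen U := by
    have hf : Continuous fun q : (I → I) × I => (q.1 t₀ : ℝ) :=
      continuous_subtype_val.comp ((continuous_apply t₀).comp continuous_fst)
    exact isOpen_Iio.preimage hf
  have hmem : ((fun _ => 0, 1) : (I → I) × I) ∈ U := by
    simp [hU]
  rw [mem_closure_iff] at hcl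
  obtain ⟨q, hqU, hqB⟩ := hcl U hUopen hmem
  have hq1 : q.1 t₀ = 1 := by
    rcases hval q hqB t₀ with h0 | h1
    · exact absurd (Set.mem_biUnion hqB h0) ht₀
    · exact h1
  rw [hU] at hqU
  simp only [Set.mem_setOf_eq, hq1] at hqU
  norm_num at hqU
end
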